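/- Let Θ be an invertible skew-symmetric real 4×4 matrix, let f, g : ℝ⁴ → ℂ be Schwartz functions, and let χ : ℝ⁴ × ℝ⁴ → ℂ be a smooth compactly supported function with χ(0,0) = 1. Then for every z ∈ ℝ⁴, lim_{ε→0⁺} (2π)^{-4} ∬_{ℝ⁴×ℝ⁴} χ(εx, εy) f(z+Θx) g(z+y) e^{−i B(x,y)} dx dy = (f ×_Θ g)(z). In particular the cutoff-regularized Rieffel product is independent of the choice of cutoff function χ. -/

import Mathlib

noncomputable section

open MeasureTheory Filter Matrix

/-- ℝ⁴ as a Euclidean space. -/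
abbrev V4 : Type := EuclideanSpace ℝ (Fin 4)

/-- The Minkowski bilinear form B(x,y) = -x⁰y⁰ + x¹y¹ + x²y² + x³y³. -/
def minkB (x y : V4) : ℝ := -(x 0 * y 0) + x 1 * y 1 + x 2 * y 2 + x 3 * y 3

/-- Matrix–vector multiplication Θx on ℝ⁴. -/
def thetaAct (Θ : Matrix (Fin 4) (Fin 4) ℝ) (x : V4) : V4 :=
  WithLp.toLp 2 (fun i => ∑ j, Θ i j * x j)

/-- The constant (2π)⁻⁴ as a complex number. -/
def c4 : ℂ := ((((2 * Real.pi) ^ 4)⁻¹ : ℝ) : ℂ)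

/-- The Rieffel product (f ×_Θ g)(z) = (2π)⁻⁴ ∬ f(z+Θx) g(z+y) e^{-i B(x,y)} dx dy. -/
def rieffel (Θ : Matrix (Fin 4) (Fin 4) ℝ) (f g : V4 → ℂ) (z : V4) : ℂ :=
  c4 * ∫ p : V4 × V4, f (z + thetaAct Θ p.1) * g (z + p.2) *
    Complex.exp (-Complex.I * (minkB p.1 p.2 : ℂ))

/-- The Minkowski Fourier transform (Fg)(ξ) = ∫ g(x) e^{-i B(ξ,x)} dx. -/
def minkFT (g : V4 → ℂ) (ξ : V4) : ℂ :=
  ∫ x : V4, g x * Complex.exp (-Complex.I * (minkB ξ x : ℂ))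

lemma integrable_schwartz_theta (Θ : Matrix (Fin 4) (Fin 4) ℝ) (hinv : IsUnit Θ)
    (f : SchwartzMap V4 ℂ) (z : V4) :
    Integrable (fun x : V4 => f (z + thetaAct Θ x)) := by
  set L : V4 →ₗ[ℝ] V4 := Matrix.toEuclideanLin (𝕜 := ℝ) Θ with hL
  have hdet : LinearMap.det L ≠ 0 := by
    rw [hL, Matrix.toEuclideanLin_eq_toLin, LinearMap.det_toLin]
    exact (Matrix.isUnit_iff_isUnit_det Θ |>.mp hinv).ne_zero
  have hG : Integrable (fun w : V4 => f (z + w)) := f.integrable.comp_add_left z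
  have hcont : Continuous fun w : V4 => f (z + w) :=
    f.continuous.comp (continuous_const.add continuous_id)
  have hmap := Measure.map_linearMap_addHaar_eq_smul_addHaar (volume : Measure V4) hdet
  have h2 : Integrable (fun w : V4 => f (z + w)) ((volume : Measure V4).map L) := by
    rw [hmap]; exact hG.smul_measure ENNReal.ofReal_ne_top
  exact (integrable_map_measure hcont.aestronglyMeasurable
    L.continuous_of_finiteDimensional.measurable.aemeasurable).mp h2

lemma thetaAct_continuous (Θ : Matrix (Fin 4) (Fin 4) ℝ) : Continuous (thetaAct Θ) :=
  (Matrix.toEuclideanLin (𝕜 := ℝ) Θ).continuous_of_finiteDimensional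

lemma minkB_continuous : Continuous fun p : V4 × V4 => minkB p.1 p.2 := by
  unfold minkB
  have h : ∀ i : Fin 4, Continuous fun x : V4 => x i := fun i =>
    (EuclideanSpace.proj i : V4 →L[ℝ] ℝ).continuous
  fun_prop

lemma norm_exp_neg_I_mul (r : ℝ) : ‖Complex.exp (-Complex.I * (r : ℂ))‖ = 1 := by
  rw [Complex.norm_exp]
  simp [Complex.mul_re]

/-- the cutoff-regularized Rieffel product converges, as ε → 0⁺, to the
Rieffel product, for any smooth compactly supported cutoff χ with χ(0,0) = 1. -/
theorem rieffel_cutoff_limit (Θ : Matrix (Fin 4) (Fin 4) ℝ)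
    (hinv : IsUnit Θ) (hskew : Θᵀ = -Θ)
    (f g : SchwartzMap V4 ℂ) (χ : V4 × V4 → ℂ)
    (hχ_smooth : ContDiff ℝ (⊤ : ℕ∞) χ) (hχ_supp : HasCompactSupport χ) (hχ_one : χ (0, 0) = 1)
    (z : V4) :
    Tendsto (fun ε : ℝ =>
        c4 * ∫ p : V4 × V4, χ (ε • p.1, ε • p.2) * f (z + thetaAct Θ p.1) * g (z + p.2) *
          Complex.exp (-Complex.I * (minkB p.1 p.2 : ℂ)))
      (nhdsWithin 0 (Set.Ioi 0)) (nhds (rieffel Θ (⇑f) (⇑g) z)) := by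
  obtain ⟨C, hC⟩ := hχ_smooth.continuous.bounded_above_of_compact_support hχ_supp
  have hf1 : Integrable (fun x : V4 => f (z + thetaAct Θ x)) :=
    integrable_schwartz_theta Θ hinv f z
  have hg1 : Integrable (fun y : V4 => g (z + y)) := g.integrable.comp_add_left z
  have hbound : Integrable (fun p : V4 × V4 =>
      C * (‖f (z + thetaAct Θ p.1)‖ * ‖g (z + p.2)‖)) := by
    rw [Measure.volume_eq_prod]
    exact (hf1.norm.mul_prod hg1.norm).const_mul C
  have hcontF : ∀ ε : ℝ, Continuous fun p : V4 × V4 =>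
      χ (ε • p.1, ε • p.2) * f (z + thetaAct Θ p.1) * g (z + p.2) *
        Complex.exp (-Complex.I * (minkB p.1 p.2 : ℂ)) := by
    intro ε
    have h1 : Continuous fun p : V4 × V4 => χ (ε • p.1, ε • p.2) :=
      hχ_smooth.continuous.comp
        (((continuous_const : Continuous fun _ : V4 × V4 => ε).smul continuous_fst).prodMk
          ((continuous_const : Continuous fun _ : V4 × V4 => ε).smul continuous_snd))
    have h2 : Continuous fun p : V4 × V4 => (f : V4 → ℂ) (z + thetaAct Θ p.1) :=
      f.continuous.comp (continuous_const.add ((thetaAct_continuous Θ).comp continuous_fst))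
    have h3 : Continuous fun p : V4 × V4 => (g : V4 → ℂ) (z + p.2) :=
      g.continuous.comp (continuous_const.add continuous_snd)
    have h4 : Continuous fun p : V4 × V4 =>
        Complex.exp (-Complex.I * (minkB p.1 p.2 : ℂ)) :=
      Complex.continuous_exp.comp
        (continuous_const.mul (Complex.continuous_ofReal.comp minkB_continuous))
    exact ((h1.mul h2).mul h3).mul h4
  have main : Tendsto (fun ε : ℝ =>
      ∫ p : V4 × V4, χ (ε • p.1, ε • p.2) * f (z + thetaAct Θ p.1) * g (z + p.2) *
        Complex.exp (-Complex.I * (minkB p.1 p.2 : ℂ)))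
      (nhdsWithin 0 (Set.Ioi 0))
      (nhds (∫ p : V4 × V4, f (z + thetaAct Θ p.1) * g (z + p.2) *
        Complex.exp (-Complex.I * (minkB p.1 p.2 : ℂ)))) := by
    apply tendsto_integral_filter_of_dominated_convergence
      (bound := fun p : V4 × V4 => C * (‖f (z + thetaAct Θ p.1)‖ * ‖g (z + p.2)‖))
    · exact Eventually.of_forall fun ε => (hcontF ε).aestronglyMeasurable
    · refine Eventually.of_forall fun ε => Eventually.of_forall fun p => ?_
      calc ‖χ (ε • p.1, ε • p.2) * f (z + thetaAct Θ p.1) * g (z + p.2) *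
          Complex.exp (-Complex.I * (minkB p.1 p.2 : ℂ))‖
          = ‖χ (ε • p.1, ε • p.2)‖ * ‖(f : V4 → ℂ) (z + thetaAct Θ p.1)‖ *
            ‖(g : V4 → ℂ) (z + p.2)‖ *
            ‖Complex.exp (-Complex.I * (minkB p.1 p.2 : ℂ))‖ := by
            simp [norm_mul]
        _ ≤ C * (‖(f : V4 → ℂ) (z + thetaAct Θ p.1)‖ * ‖(g : V4 → ℂ) (z + p.2)‖) := by
            rw [norm_exp_neg_I_mul, mul_one, mul_assoc]
            exact mul_le_mul_of_nonneg_right (hC _)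
              (mul_nonneg (norm_nonneg _) (norm_nonneg _))
    · exact hbound
    · refine Eventually.of_forall fun p => ?_
      have h1 : Tendsto (fun ε : ℝ => χ (ε • p.1, ε • p.2)) (nhdsWithin 0 (Set.Ioi 0))
          (nhds (1 : ℂ)) := by
        have hc : Continuous fun ε : ℝ => χ (ε • p.1, ε • p.2) :=
          hχ_smooth.continuous.comp
            ((continuous_id.smul continuous_const).prodMk (continuous_id.smul continuous_const))
        have h0 : (((0:ℝ) • p.1, (0:ℝ) • p.2) : V4 × V4) = (0, 0) := by simp
        have := hc.tendsto 0
        rw [h0, hχ_one] at this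
        exact this.mono_left nhdsWithin_le_nhds
      have h2 : Tendsto (fun ε : ℝ => χ (ε • p.1, ε • p.2) * f (z + thetaAct Θ p.1) *
          g (z + p.2) * Complex.exp (-Complex.I * (minkB p.1 p.2 : ℂ)))
          (nhdsWithin 0 (Set.Ioi 0))
          (nhds ((1 : ℂ) * f (z + thetaAct Θ p.1) * g (z + p.2) *
            Complex.exp (-Complex.I * (minkB p.1 p.2 : ℂ)))) :=
        ((h1.mul tendsto_const_nhds).mul tendsto_const_nhds).mul tendsto_const_nhds
      simpa using h2
  have := main.const_mul c4
  simpa [rieffel] using this
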